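/- For λ ∈ (0,1), there exists no nontrivial real C² function u on [0,1] such that u(0) = 0, u'(0) > 0, u(ρ) > 0 on (0,1), u(1) > 0, u'(1) > 0, u' changes sign on (0,1), and at every interior critical point ρ* ∈ (0,1) of u one has u''(ρ*) = β_λ(ρ*)u(ρ*), where β_λ(ρ) = λ(1+λ)/(1-ρ²) + 2(1-6ρ²+ρ⁴)/(ρ²(1-ρ²)(1+ρ²)²). -/

import Mathlib

/-!
Let `C ∈ (0,1)` with `u'(C) < 0`. Since `u(0) = 0 < u(C)`, `u` attains its maximum over `[0, C]`
at an interior point `ρ₁`, and since `u'(C) < 0 < u'(1)` it attains its minimum over `[C, 1]` at an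
interior point `ρ₂ > ρ₁`. Both are critical points, so the second derivative test and `u > 0` give
`β_λ(ρ₁) ≤ 0 ≤ β_λ(ρ₂)`. This is impossible because `ρ² (1 + ρ²)² β_λ(ρ)` is strictly decreasing
on `(0, 1)`.
-/

noncomputable def β (lam ρ : ℝ) : ℝ :=
  lam * (1 + lam) / (1 - ρ^2) + 2 * (1 - 6*ρ^2 + ρ^4) / (ρ^2 * (1 - ρ^2) * (1 + ρ^2)^2)

open Set Filter Topology

section Extrema

variable {f : ℝ → ℝ} {a b x f' : ℝ}

theorem IsLocalMaxOn.sub_mul_nonpos_of_hasDerivWithinAt {s : Set ℝ} (h : IsLocalMaxOn f s a)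
    (hf : HasDerivWithinAt f f' s a) (hx : segment ℝ a x ⊆ s) : (x - a) * f' ≤ 0 := by
  simpa using h.hasFDerivWithinAt_nonpos hf (sub_mem_posTangentConeAt_of_segment_subset hx)

theorem IsLocalMinOn.sub_mul_nonneg_of_hasDerivWithinAt {s : Set ℝ} (h : IsLocalMinOn f s a)
    (hf : HasDerivWithinAt f f' s a) (hx : segment ℝ a x ⊆ s) : 0 ≤ (x - a) * f' := by
  simpa using h.hasFDerivWithinAt_nonneg hf (sub_mem_posTangentConeAt_of_segment_subset hx)

theorem exists_isLocalMax_mem_Ioo_of_lt_of_hasDerivWithinAt_neg (hab : a < b)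
    (hf : ContinuousOn f (Icc a b)) (hlt : f a < f b) (hb : HasDerivWithinAt f f' (Icc a b) b)
    (hf' : f' < 0) : ∃ c ∈ Ioo a b, IsLocalMax f c := by
  obtain ⟨c, hc, hmax⟩ := isCompact_Icc.exists_isMaxOn (nonempty_Icc.2 hab.le) hf
  have hca : c ≠ a := by
    rintro rfl
    exact (hmax (right_mem_Icc.2 hab.le)).not_gt hlt
  have hcb : c ≠ b := by
    rintro rfl
    have := hmax.localize.sub_mul_nonpos_of_hasDerivWithinAt hb (x := a)
      (by rw [segment_symm, segment_eq_Icc hab.le])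
    nlinarith
  have hmem : c ∈ Ioo a b := ⟨hc.1.lt_of_ne' hca, hc.2.lt_of_ne hcb⟩
  exact ⟨c, hmem, hmax.isLocalMax (Icc_mem_nhds hmem.1 hmem.2)⟩

theorem exists_isLocalMin_mem_Ioo_of_hasDerivWithinAt_neg_of_pos {f'a f'b : ℝ} (hab : a < b)
    (hf : ContinuousOn f (Icc a b)) (ha : HasDerivWithinAt f f'a (Icc a b) a)
    (hb : HasDerivWithinAt f f'b (Icc a b) b) (ha' : f'a < 0) (hb' : 0 < f'b) :
    ∃ c ∈ Ioo a b, IsLocalMin f c := by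
  obtain ⟨c, hc, hmin⟩ := isCompact_Icc.exists_isMinOn (nonempty_Icc.2 hab.le) hf
  have hca : c ≠ a := by
    rintro rfl
    have := hmin.localize.sub_mul_nonneg_of_hasDerivWithinAt ha (x := b)
      (segment_eq_Icc hab.le).subset
    nlinarith
  have hcb : c ≠ b := by
    rintro rfl
    have := hmin.localize.sub_mul_nonneg_of_hasDerivWithinAt hb (x := a)
      (by rw [segment_symm, segment_eq_Icc hab.le])
    nlinarith
  have hmem : c ∈ Ioo a b := ⟨hc.1.lt_of_ne' hca, hc.2.lt_of_ne hcb⟩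
  exact ⟨c, hmem, hmin.isLocalMin (Icc_mem_nhds hmem.1 hmem.2)⟩

/-- If `f''(x) > 0` at a local maximum, the second derivative test makes `x` a local minimum as
well, so `f` is locally constant and `f''(x) = 0`. -/
theorem IsLocalMax.deriv_deriv_nonpos (h : IsLocalMax f x) (hc : ContinuousAt f x) :
    deriv (deriv f) x ≤ 0 := by
  by_contra! hpos
  have hconst : f =ᶠ[𝓝 x] fun _ ↦ f x := by
    filter_upwards [h, isLocalMin_of_deriv_deriv_pos hpos h.deriv_eq_zero hc] with y hmax hmin
    exact le_antisymm hmax hmin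
  have : deriv (deriv f) x = 0 := by simpa using hconst.deriv.deriv_eq
  linarith

theorem IsLocalMin.deriv_deriv_nonneg (h : IsLocalMin f x) (hc : ContinuousAt f x) :
    0 ≤ deriv (deriv f) x := by
  simpa [deriv.neg'] using h.neg.deriv_deriv_nonpos hc.neg

end Extrema

section Beta

variable {lam : ℝ}

theorem sq_mul_one_add_sq_sq_mul_beta {ρ : ℝ} (hρ : ρ ∈ Ioo (0 : ℝ) 1) :
    ρ ^ 2 * (1 + ρ ^ 2) ^ 2 * β lam ρ =
      (lam * (1 + lam) * ρ ^ 2 * (1 + ρ ^ 2) ^ 2 + 2 * (1 - 6 * ρ ^ 2 + ρ ^ 4)) / (1 - ρ ^ 2) := by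
  have hρ0 : ρ ≠ 0 := hρ.1.ne'
  have h1 : 1 - ρ ^ 2 ≠ 0 := by nlinarith [hρ.1, hρ.2]
  unfold β
  field_simp

theorem strictAntiOn_sq_mul_one_add_sq_sq_mul_beta (h₀ : 0 ≤ lam) (h₁ : lam < 1) :
    StrictAntiOn (fun ρ ↦ ρ ^ 2 * (1 + ρ ^ 2) ^ 2 * β lam ρ) (Ioo 0 1) := by
  intro s hs t ht hst
  simp only [sq_mul_one_add_sq_sq_mul_beta hs, sq_mul_one_add_sq_sq_mul_beta ht]
  set c := lam * (1 + lam)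
  set x := s ^ 2
  set y := t ^ 2
  have hc0 : 0 ≤ c := by positivity
  have hc2 : c < 2 := by nlinarith
  have hxy : x < y := pow_lt_pow_left₀ hst hs.1.le two_ne_zero
  have hy : y < 1 := by nlinarith [ht.1, ht.2]
  rw [show s ^ 4 = x ^ 2 by ring, show t ^ 4 = y ^ 2 by ring,
    div_lt_div_iff₀ (by linarith) (by linarith)]
  -- `g x / (1 - x)` decreases on `(0, 1)` for `g x = c x (1 + x)² + 2 (1 - 6 x + x²)`, `0 ≤ c < 2`
  have key : (c * y * (1 + y) ^ 2 + 2 * (1 - 6 * y + y ^ 2)) * (1 - x) -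
      (c * x * (1 + x) ^ 2 + 2 * (1 - 6 * x + x ^ 2)) * (1 - y) =
      (y - x) * (4 * c - 8) - (y - x) * (1 - x) * (1 - y) * (c * (x + y + 3) + 2) := by ring
  have hneg : (y - x) * (4 * c - 8) < 0 := mul_neg_of_pos_of_neg (by linarith) (by linarith)
  have hnonneg : 0 ≤ (y - x) * (1 - x) * (1 - y) * (c * (x + y + 3) + 2) := by
    have hyx : 0 < y - x := sub_pos.2 hxy
    have h1x : 0 < 1 - x := by linarith
    have h1y : 0 < 1 - y := sub_pos.2 hy
    positivity
  linarith

theorem beta_neg_of_beta_nonpos (h₀ : 0 ≤ lam) (h₁ : lam < 1) {s t : ℝ} (hs : 0 < s)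
    (hst : s < t) (ht : t < 1) (hβ : β lam s ≤ 0) : β lam t < 0 := by
  have hlt := strictAntiOn_sq_mul_one_add_sq_sq_mul_beta h₀ h₁ ⟨hs, hst.trans ht⟩
    ⟨hs.trans hst, ht⟩ hst
  have hws : s ^ 2 * (1 + s ^ 2) ^ 2 * β lam s ≤ 0 :=
    mul_nonpos_of_nonneg_of_nonpos (by positivity) hβ
  exact neg_of_mul_neg_right (hlt.trans_le hws) (by positivity)

end Beta

theorem no_positive_function_with_critical_structure_general (lam : ℝ)
    (hlam : lam ∈ Set.Ioo (0:ℝ) 1) (u : ℝ → ℝ)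
    (hu : ContDiffOn ℝ 2 u (Set.Icc (0:ℝ) 1))
    (h0 : u 0 = 0)
    (hpos : ∀ ρ ∈ Set.Ioo (0:ℝ) 1, 0 < u ρ)
    (h1' : 0 < derivWithin u (Set.Icc (0:ℝ) 1) 1)
    (hsign : ∃ a ∈ Set.Ioo (0:ℝ) 1, ∃ b ∈ Set.Ioo (0:ℝ) 1, deriv u a * deriv u b < 0)
    (hcrit : ∀ ρ ∈ Set.Ioo (0:ℝ) 1, deriv u ρ = 0 →
      deriv (deriv u) ρ = β lam ρ * u ρ) :
    False := by
  have hint : ∀ ρ ∈ Ioo (0 : ℝ) 1, ContDiffAt ℝ 2 u ρ := fun ρ hρ ↦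
    hu.contDiffAt (Icc_mem_nhds hρ.1 hρ.2)
  obtain ⟨C, hC, hC'⟩ : ∃ C ∈ Ioo (0 : ℝ) 1, deriv u C < 0 := by
    obtain ⟨a, ha, b, hb, hab⟩ := hsign
    rcases lt_or_ge (deriv u a) 0 with h | h
    · exact ⟨a, ha, h⟩
    · exact ⟨b, hb, by nlinarith⟩
  have hderivC : HasDerivAt u (deriv u C) C :=
    ((hint C hC).differentiableAt two_ne_zero).hasDerivAt
  have hderiv1 : HasDerivWithinAt u (derivWithin u (Icc 0 1) 1) (Icc C 1) 1 :=
    ((hu.differentiableOn two_ne_zero 1 (right_mem_Icc.2 zero_le_one)).hasDerivWithinAt).mono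
      (Icc_subset_Icc hC.1.le le_rfl)
  obtain ⟨ρ₁, hρ₁, hmax⟩ := exists_isLocalMax_mem_Ioo_of_lt_of_hasDerivWithinAt_neg hC.1
    (hu.continuousOn.mono (Icc_subset_Icc le_rfl hC.2.le)) (by rw [h0]; exact hpos C hC)
    hderivC.hasDerivWithinAt hC'
  obtain ⟨ρ₂, hρ₂, hmin⟩ := exists_isLocalMin_mem_Ioo_of_hasDerivWithinAt_neg_of_pos hC.2
    (hu.continuousOn.mono (Icc_subset_Icc hC.1.le le_rfl)) hderivC.hasDerivWithinAt hderiv1 hC' h1'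
  have hρ₁' : ρ₁ ∈ Ioo (0 : ℝ) 1 := ⟨hρ₁.1, hρ₁.2.trans hC.2⟩
  have hρ₂' : ρ₂ ∈ Ioo (0 : ℝ) 1 := ⟨hC.1.trans hρ₂.1, hρ₂.2⟩
  have hβ₁ : β lam ρ₁ ≤ 0 := by
    have := hmax.deriv_deriv_nonpos (hint ρ₁ hρ₁').continuousAt
    rw [hcrit ρ₁ hρ₁' hmax.deriv_eq_zero] at this
    exact nonpos_of_mul_nonpos_left this (hpos ρ₁ hρ₁')
  have hβ₂ : 0 ≤ β lam ρ₂ := by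
    have := hmin.deriv_deriv_nonneg (hint ρ₂ hρ₂').continuousAt
    rw [hcrit ρ₂ hρ₂' hmin.deriv_eq_zero] at this
    exact nonneg_of_mul_nonneg_left this (hpos ρ₂ hρ₂')
  exact (beta_neg_of_beta_nonpos hlam.1.le hlam.2 hρ₁'.1 (hρ₁.2.trans hρ₂.1) hρ₂'.2 hβ₁).not_ge hβ₂

theorem no_positive_function_with_critical_structure (lam : ℝ)
    (hlam : lam ∈ Set.Ioo (0:ℝ) 1) (u : ℝ → ℝ)
    (hu : ContDiffOn ℝ 2 u (Set.Icc (0:ℝ) 1))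
    (hne : ∃ ρ ∈ Set.Icc (0:ℝ) 1, u ρ ≠ 0)
    (h0 : u 0 = 0)
    (h0' : 0 < derivWithin u (Set.Icc (0:ℝ) 1) 0)
    (hpos : ∀ ρ ∈ Set.Ioo (0:ℝ) 1, 0 < u ρ)
    (h1 : 0 < u 1)
    (h1' : 0 < derivWithin u (Set.Icc (0:ℝ) 1) 1)
    (hsign : ∃ a ∈ Set.Ioo (0:ℝ) 1, ∃ b ∈ Set.Ioo (0:ℝ) 1, deriv u a * deriv u b < 0)
    (hcrit : ∀ ρ ∈ Set.Ioo (0:ℝ) 1, deriv u ρ = 0 →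
      deriv (deriv u) ρ = β lam ρ * u ρ) :
    False :=
  no_positive_function_with_critical_structure_general lam hlam u hu h0 hpos h1' hsign hcrit
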